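/- Let M(t) be a C¹ family of invertible matrices, R = (∂_tM)M^{−1}, and D_t v := ∂_t v − Rv. If div_𝒜 v = 0 for all t (where 𝒜, J are time-dependent with J div_𝒜 v = div(M^{−1}v)), then div_𝒜(D_t v) = 0 for all t. -/

import Mathlib

/-!
Since `J div_𝒜 w = div (M⁻¹ w)`, the hypothesis says `div (M⁻¹ v) = 0` at every time.
Differentiating `M⁻¹ M = 1` gives `∂ₜ (M⁻¹) = -M⁻¹ (∂ₜ M) M⁻¹`, hence `∂ₜ (M⁻¹ v) = M⁻¹ Dₜ v`.
As `M⁻¹ v` is `C²` in `(t, x)`, `∂ₜ` commutes with the spatial divergence (symmetry of second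
derivatives), so `div (M⁻¹ Dₜ v) = ∂ₜ div (M⁻¹ v) = 0`.
-/

open Matrix

/-- Spatial divergence of a planar vector field. -/
noncomputable def spatialDiv (F : ℝ × ℝ → Fin 2 → ℝ) (x : ℝ × ℝ) : ℝ :=
  deriv (fun s => F (s, x.2) 0) x.1 + deriv (fun s => F (x.1, s) 1) x.2

namespace Matrix

variable {𝕜 : Type*} [NontriviallyNormedField 𝕜] {n : Type*} [Fintype n]

section ContDiff

variable {E : Type*} [NormedAddCommGroup E] [NormedSpace 𝕜 E] {k : WithTop ℕ∞}
  {M : E → Matrix n n 𝕜}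

theorem contDiff_mulVec_apply {w : E → n → 𝕜} (hM : ∀ i j, ContDiff 𝕜 k fun x => M x i j)
    (hw : ∀ j, ContDiff 𝕜 k fun x => w x j) (i : n) :
    ContDiff 𝕜 k fun x => (M x *ᵥ w x) i := by
  simp only [mulVec, dotProduct]
  exact ContDiff.sum fun j _ => (hM i j).mul (hw j)

variable [DecidableEq n]

theorem contDiff_det (hM : ∀ i j, ContDiff 𝕜 k fun x => M x i j) :
    ContDiff 𝕜 k fun x => (M x).det := by
  simp only [det_apply']
  exact ContDiff.sum fun σ _ => contDiff_const.mul (contDiff_prod fun i _ => hM (σ i) i)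

theorem contDiff_adjugate_apply (hM : ∀ i j, ContDiff 𝕜 k fun x => M x i j) (i j : n) :
    ContDiff 𝕜 k fun x => (M x).adjugate i j := by
  simp only [adjugate_apply]
  refine contDiff_det fun p q => ?_
  simp only [updateRow_apply]
  split_ifs
  · exact contDiff_const
  · exact hM p q

theorem contDiff_inv_apply [CompleteSpace 𝕜] (hM : ∀ i j, ContDiff 𝕜 k fun x => M x i j)
    (hdet : ∀ x, IsUnit (M x).det) (i j : n) :
    ContDiff 𝕜 k fun x => (M x)⁻¹ i j := by
  simp only [inv_def, Matrix.smul_apply, Ring.inverse_eq_inv', smul_eq_mul]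
  exact ((contDiff_det hM).inv fun x => (hdet x).ne_zero).mul (contDiff_adjugate_apply hM i j)

end ContDiff

variable {A B : 𝕜 → Matrix n n 𝕜} {A' B' : Matrix n n 𝕜} {t : 𝕜}

theorem hasDerivAt_mul_apply (hA : ∀ i j, HasDerivAt (fun s => A s i j) (A' i j) t)
    (hB : ∀ i j, HasDerivAt (fun s => B s i j) (B' i j) t) (i j : n) :
    HasDerivAt (fun s => (A s * B s) i j) ((A' * B t + A t * B') i j) t := by
  simp only [mul_apply, Matrix.add_apply, ← Finset.sum_add_distrib]
  exact HasDerivAt.fun_sum fun l _ => (hA i l).fun_mul (hB l j)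

theorem hasDerivAt_mulVec_apply {w : 𝕜 → n → 𝕜} {w' : n → 𝕜}
    (hA : ∀ i j, HasDerivAt (fun s => A s i j) (A' i j) t) (hw : HasDerivAt w w' t) (i : n) :
    HasDerivAt (fun s => (A s *ᵥ w s) i) ((A' *ᵥ w t + A t *ᵥ w') i) t := by
  simp only [mulVec, dotProduct, Pi.add_apply, ← Finset.sum_add_distrib]
  exact HasDerivAt.fun_sum fun j _ => (hA i j).fun_mul (hasDerivAt_pi.1 hw j)

theorem hasDerivAt_inv_apply [DecidableEq n]
    (hA : ∀ i j, HasDerivAt (fun s => A s i j) (A' i j) t)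
    (hinv : ∀ i j, DifferentiableAt 𝕜 (fun s => (A s)⁻¹ i j) t) (hdet : ∀ s, IsUnit (A s).det)
    (i j : n) :
    HasDerivAt (fun s => (A s)⁻¹ i j) ((-((A t)⁻¹ * A' * (A t)⁻¹)) i j) t := by
  set D : Matrix n n 𝕜 := fun i j => deriv (fun s => (A s)⁻¹ i j) t
  have hD : ∀ i j, HasDerivAt (fun s => (A s)⁻¹ i j) (D i j) t := fun i j => (hinv i j).hasDerivAt
  have hDA : D * A t + (A t)⁻¹ * A' = 0 := by
    ext i j
    have hone := hasDerivAt_mul_apply hD hA i j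
    simp only [nonsing_inv_mul _ (hdet _)] at hone
    exact hone.unique (hasDerivAt_const t _)
  have hD_eq : D = -((A t)⁻¹ * A' * (A t)⁻¹) :=
    calc D = D * A t * (A t)⁻¹ := by rw [mul_assoc, mul_nonsing_inv _ (hdet t), mul_one]
      _ = _ := by rw [eq_neg_of_add_eq_zero_left hDA, neg_mul]
  simpa only [hD_eq] using hD i j

end Matrix

section Slices

variable {G : Type*} [NormedAddCommGroup G] [NormedSpace ℝ G] {f : ℝ × ℝ → G}
  {f' : ℝ × ℝ →L[ℝ] G} {a b : ℝ}

theorem HasFDerivAt.hasDerivAt_slice_fst (hf : HasFDerivAt f f' (a, b)) :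
    HasDerivAt (fun τ => f (τ, b)) (f' (1, 0)) a :=
  hf.comp_hasDerivAt a ((hasDerivAt_id a).prodMk (hasDerivAt_const a b))

theorem HasFDerivAt.hasDerivAt_slice_snd (hf : HasFDerivAt f f' (a, b)) :
    HasDerivAt (fun s => f (a, s)) (f' (0, 1)) b :=
  hf.comp_hasDerivAt b ((hasDerivAt_const b a).prodMk (hasDerivAt_id b))

end Slices

theorem hasDerivAt_deriv_comm {F : Type*} [NormedAddCommGroup F] [NormedSpace ℝ F]
    {g : ℝ × ℝ → F} (hg : ContDiff ℝ 2 g) {g' : ℝ → F} {a b : ℝ}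
    (hg' : ∀ s, HasDerivAt (fun τ => g (τ, s)) (g' s) a) :
    HasDerivAt (fun τ => deriv (fun s => g (τ, s)) b) (deriv g' b) a := by
  have hg1 : Differentiable ℝ g := hg.differentiable two_ne_zero
  have hg2 : Differentiable ℝ (fderiv ℝ g) :=
    (hg.fderiv_right (m := 1) le_rfl).differentiable one_ne_zero
  have hsnd : ∀ τ, deriv (fun s => g (τ, s)) b = fderiv ℝ g (τ, b) (0, 1) := fun τ =>
    (hg1 _).hasFDerivAt.hasDerivAt_slice_snd.deriv
  have hfst : g' = fun s => fderiv ℝ g (a, s) (1, 0) := funext fun s =>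
    (hg' s).unique (hg1 _).hasFDerivAt.hasDerivAt_slice_fst
  have hsymm := hg.contDiffAt.isSymmSndFDerivAt (x := (a, b)) (by simp) (1, 0) (0, 1)
  simp only [hsnd, hfst]
  rw [((hg2 _).hasFDerivAt.hasDerivAt_slice_snd.clm_apply (hasDerivAt_const _ _)).deriv]
  simpa [← hsymm] using (hg2 _).hasFDerivAt.hasDerivAt_slice_fst.clm_apply (hasDerivAt_const _ _)

theorem hasDerivAt_spatialDiv {W : ℝ → ℝ × ℝ → Fin 2 → ℝ} {W' : ℝ × ℝ → Fin 2 → ℝ} {t : ℝ}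
    (hW : ∀ i, ContDiff ℝ 2 fun p : ℝ × (ℝ × ℝ) => W p.1 p.2 i)
    (hW' : ∀ y i, HasDerivAt (fun τ => W τ y i) (W' y i) t) (x : ℝ × ℝ) :
    HasDerivAt (fun τ => spatialDiv (W τ) x) (spatialDiv W' x) t := by
  have h₀ : ContDiff ℝ 2 fun q : ℝ × ℝ => W q.1 (q.2, x.2) 0 :=
    (hW 0).comp (contDiff_fst.prodMk (contDiff_snd.prodMk contDiff_const))
  have h₁ : ContDiff ℝ 2 fun q : ℝ × ℝ => W q.1 (x.1, q.2) 1 :=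
    (hW 1).comp (contDiff_fst.prodMk (contDiff_const.prodMk contDiff_snd))
  exact (hasDerivAt_deriv_comm h₀ fun s => hW' (s, x.2) 0).add
    (hasDerivAt_deriv_comm h₁ fun s => hW' (x.1, s) 1)

/-- The operator `D_t v = ∂_t v − Rv` with `R = (∂_tM)M⁻¹` preserves the
`div_𝒜`-free condition: since `J div_𝒜 w = div(M⁻¹w)` (with `J ≠ 0`),
`div_𝒜 v = 0` for all `t` is `div(M⁻¹(t)v(t)) = 0`, and then
`div(M⁻¹ D_t v) = div(∂_t(M⁻¹v)) = ∂_t div(M⁻¹v) = 0`, i.e.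
`div_𝒜(D_t v) = 0`. -/
theorem Dt_preserves_divA_free
    (M M' : ℝ → ℝ × ℝ → Matrix (Fin 2) (Fin 2) ℝ)
    (v v' : ℝ → ℝ × ℝ → Fin 2 → ℝ)
    (hMsmooth : ∀ i j, ContDiff ℝ 2 fun p : ℝ × (ℝ × ℝ) => M p.1 p.2 i j)
    (hvsmooth : ∀ i, ContDiff ℝ 2 fun p : ℝ × (ℝ × ℝ) => v p.1 p.2 i)
    (hMinv : ∀ t x, IsUnit (M t x).det)
    (hM' : ∀ t x i j, HasDerivAt (fun s => M s x i j) (M' t x i j) t)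
    (hv' : ∀ t x, HasDerivAt (fun s => v s x) (v' t x) t)
    (hfree : ∀ t x, spatialDiv (fun y => (M t y)⁻¹ *ᵥ v t y) x = 0) :
    ∀ t x, spatialDiv
        (fun y => (M t y)⁻¹ *ᵥ (v' t y - (M' t y * (M t y)⁻¹) *ᵥ v t y)) x = 0 := by
  intro t x
  have hMinv_smooth := contDiff_inv_apply hMsmooth fun p => hMinv p.1 p.2
  have hMinv_deriv : ∀ y i j, HasDerivAt (fun s => (M s y)⁻¹ i j)
      ((-((M t y)⁻¹ * M' t y * (M t y)⁻¹)) i j) t := fun y =>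
    hasDerivAt_inv_apply (hM' t y)
      (fun i j => ((hMinv_smooth i j).comp (by fun_prop : ContDiff ℝ 2 fun s : ℝ => (s, y))
        |>.differentiable two_ne_zero) t) (hMinv · y)
  have hDt : ∀ y i, HasDerivAt (fun s => ((M s y)⁻¹ *ᵥ v s y) i)
      (((M t y)⁻¹ *ᵥ (v' t y - (M' t y * (M t y)⁻¹) *ᵥ v t y)) i) t := fun y i => by
    refine (hasDerivAt_mulVec_apply (hMinv_deriv y) (hv' t y) i).congr_deriv ?_
    rw [neg_mulVec, mulVec_sub, mulVec_mulVec, mul_assoc, neg_add_eq_sub]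
  have hdiv := hasDerivAt_spatialDiv (contDiff_mulVec_apply hMinv_smooth hvsmooth) hDt x
  simp only [hfree] at hdiv
  exact hdiv.unique (hasDerivAt_const t 0)
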